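/- arXiv:math/0703062 — 2 statements merged into one kernel-verified Lean document; each statement's English description precedes it below -/
import Mathlib

section
/- With the coefficients b_α defined by b_{g_0}=1 and b_α = Σ_{j=1}^{|α|} Σ_{γ_1⋯γ_j=α, |γ_i|≥1} a_{γ_1}⋯a_{γ_j} for |α|≥1 (where a_α ≥ 0), one has the submultiplicativity-type inequality b_α · b_β ≤ b_{αβ} for all words α, β ∈ F_n^+. -/
open Filter Topology
open scoped ComplexConjugate ENNReal

namespace NCDomain

/-- Words in the free monoid `F_n^+` on `n` generators. -/
abbrev Word (n : ℕ) := FreeMonoid (Fin n)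

instance {n : ℕ} : DecidableEq (Word n) :=
  inferInstanceAs (DecidableEq (List (Fin n)))

/-- The length `|α|` of a word. -/
def wordLen {n : ℕ} (α : Word n) : ℕ := FreeMonoid.length α

/-- The coefficients `b_α`, defined by `b_{g_0} = 1` and, for `|α| ≥ 1`,
`b_α = Σ_{j=1}^{|α|} Σ_{γ_1⋯γ_j = α, |γ_i| ≥ 1} a_{γ_1}⋯a_{γ_j}`, the sum running over
all ordered factorizations of `α` into nonempty words. -/
noncomputable def bCoeff {n : ℕ} (a : Word n → ℝ) (α : Word n) : ℝ :=
  if α = 1 then 1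
  else ∑' L : {L : List (Word n) // L.prod = α ∧ ∀ w ∈ L, w ≠ 1}, (L.1.map a).prod

lemma word_eq_one_iff {n : ℕ} (w : Word n) : w = 1 ↔ FreeMonoid.toList w = [] := by
  constructor
  · rintro rfl; rfl
  · intro h
    have : FreeMonoid.toList w = FreeMonoid.toList (1 : Word n) := h
    exact FreeMonoid.toList.injective this

lemma toList_prod {n : ℕ} (L : List (Word n)) :
    FreeMonoid.toList L.prod = (L.map FreeMonoid.toList).flatten := by
  induction L with
  | nil => rfl
  | cons w L ih => simp [ih]

lemma flatten_inj {γ : Type*} : ∀ (M M' : List (List γ)),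
    M.map List.length = M'.map List.length → M.flatten = M'.flatten → M = M' := by
  intro M
  induction M with
  | nil => intro M' h _; cases M' <;> simp_all
  | cons x M ih =>
    intro M' h hf
    cases M' with
    | nil => simp_all
    | cons y M' =>
      simp only [List.map_cons, List.cons.injEq] at h
      simp only [List.flatten_cons] at hf
      obtain ⟨hxy, hMM'⟩ := List.append_inj hf h.1
      exact by rw [hxy, ih M' h.2 hMM']

lemma factorizations_finite {n : ℕ} (α : Word n) :
    Finite {L : List (Word n) // L.prod = α ∧ ∀ w ∈ L, w ≠ 1} := by
  apply Finite.of_injective (β := Composition (FreeMonoid.toList α).length)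
    (f := fun L => ⟨(L.1.map FreeMonoid.toList).map List.length, ?_, ?_⟩)
  · rintro ⟨L, hL, hL'⟩ ⟨M, hM, hM'⟩ h
    simp only [Composition.mk.injEq] at h
    have hfl : (L.map FreeMonoid.toList).flatten = (M.map FreeMonoid.toList).flatten := by
      rw [← toList_prod, ← toList_prod, hL, hM]
    have := flatten_inj _ _ (by simpa [List.map_map] using h) hfl
    have : L = M := by
      have hinj : Function.Injective (List.map (FreeMonoid.toList (α := Fin n))) :=
        List.map_injective_iff.2 FreeMonoid.toList.injective
      exact hinj this
    exact Subtype.ext this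
  · intro i hi
    simp only [List.mem_map] at hi
    obtain ⟨x, hx, rfl⟩ := hi
    obtain ⟨w, hw, rfl⟩ := hx
    have hne := L.2.2 w hw
    exact List.length_pos_iff.2 fun hnil => hne ((word_eq_one_iff w).2 hnil)
  · rw [← List.length_flatten, ← toList_prod, L.2.1]

lemma bCoeff_nonneg {n : ℕ} (a : Word n → ℝ) (ha : ∀ α, 0 ≤ a α) (α : Word n) :
    0 ≤ bCoeff a α := by
  unfold bCoeff
  split
  · exact zero_le_one
  · refine tsum_nonneg fun L => List.prod_nonneg ?_
    intro x hx
    simp only [List.mem_map] at hx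
    obtain ⟨w, _, rfl⟩ := hx
    exact ha w

lemma prod_ne_one {n : ℕ} (R : List (Word n)) (hR : ∀ w ∈ R, w ≠ 1) (hne : R ≠ []) :
    R.prod ≠ 1 := by
  cases R with
  | nil => exact absurd rfl hne
  | cons w R =>
    intro h
    rw [List.prod_cons, word_eq_one_iff, FreeMonoid.toList_mul,
      List.append_eq_nil_iff] at h
    exact hR w List.mem_cons_self ((word_eq_one_iff w).2 h.1)

/-- the submultiplicativity-type inequality `b_α · b_β ≤ b_{αβ}`. -/
theorem bCoeff_submul {n : ℕ} (a : Word n → ℝ) (ha : ∀ α, 0 ≤ a α) :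
    ∀ α β : Word n, bCoeff a α * bCoeff a β ≤ bCoeff a (α * β) := by
  intro α β
  by_cases hα : α = 1
  · rw [hα, one_mul]
    have : bCoeff a 1 = 1 := by simp [bCoeff]
    rw [this, one_mul]
  by_cases hβ : β = 1
  · rw [hβ, mul_one]
    have : bCoeff a 1 = 1 := by simp [bCoeff]
    rw [this, mul_one]
  have hαβ : α * β ≠ 1 := fun h => hα <| by
    have h' := (word_eq_one_iff _).1 h
    rw [FreeMonoid.toList_mul, List.append_eq_nil_iff] at h'
    exact (word_eq_one_iff α).2 h'.1
  haveI := factorizations_finite α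
  haveI := factorizations_finite β
  haveI := factorizations_finite (α * β)
  rw [bCoeff, if_neg hα, bCoeff, if_neg hβ, bCoeff, if_neg hαβ]
  rw [Summable.tsum_mul_tsum Summable.of_finite Summable.of_finite Summable.of_finite]
  set e : {L : List (Word n) // L.prod = α ∧ ∀ w ∈ L, w ≠ 1} ×
      {L : List (Word n) // L.prod = β ∧ ∀ w ∈ L, w ≠ 1} →
      {L : List (Word n) // L.prod = α * β ∧ ∀ w ∈ L, w ≠ 1} :=
    fun p => ⟨p.1.1 ++ p.2.1, by
      rw [List.prod_append, p.1.2.1, p.2.2.1], by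
      intro w hw
      rcases List.mem_append.1 hw with h | h
      · exact p.1.2.2 w h
      · exact p.2.2.2 w h⟩ with he
  have hinj : Function.Injective e := by
    rintro ⟨⟨L, hL, hL'⟩, ⟨M, hM, hM'⟩⟩ ⟨⟨L₂, hL₂, hL₂'⟩, ⟨M₂, hM₂, hM₂'⟩⟩ h
    simp only [he, Subtype.mk.injEq, Prod.mk.injEq] at h ⊢
    have hLL : L = L₂ := by
      rcases List.append_eq_append_iff.1 h with ⟨R, hR1, _⟩ | ⟨R, hR1, _⟩
      · -- L₂ = L ++ R
        have hc : α = α * R.prod := by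
          calc α = L₂.prod := hL₂.symm
          _ = (L ++ R).prod := by rw [hR1]
          _ = L.prod * R.prod := List.prod_append
          _ = α * R.prod := by rw [hL]
        have hRone : R.prod = 1 := by
          have h2 : FreeMonoid.toList α = FreeMonoid.toList α ++
              FreeMonoid.toList R.prod := by rw [← FreeMonoid.toList_mul, ← hc]
          have h3 : FreeMonoid.toList R.prod = [] := by
            have := congrArg List.length h2
            simp only [List.length_append] at this
            exact List.length_eq_zero_iff.1 (by omega)
          exact (word_eq_one_iff _).2 h3
        by_cases hRnil : R = []
        · rw [hR1, hRnil, List.append_nil]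
        · exact absurd hRone (prod_ne_one R (fun w hw => hL₂' w (by
            rw [hR1]; exact List.mem_append.2 (Or.inr hw))) hRnil)
      · -- L = L₂ ++ R
        have hc : α = α * R.prod := by
          calc α = L.prod := hL.symm
          _ = (L₂ ++ R).prod := by rw [hR1]
          _ = L₂.prod * R.prod := List.prod_append
          _ = α * R.prod := by rw [hL₂]
        have hRone : R.prod = 1 := by
          have h2 : FreeMonoid.toList α = FreeMonoid.toList α ++
              FreeMonoid.toList R.prod := by rw [← FreeMonoid.toList_mul, ← hc]
          have h3 : FreeMonoid.toList R.prod = [] := by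
            have := congrArg List.length h2
            simp only [List.length_append] at this
            exact List.length_eq_zero_iff.1 (by omega)
          exact (word_eq_one_iff _).2 h3
        by_cases hRnil : R = []
        · rw [hR1, hRnil, List.append_nil]
        · exact absurd hRone (prod_ne_one R (fun w hw => hL' w (by
            rw [hR1]; exact List.mem_append.2 (Or.inr hw))) hRnil)
    refine ⟨hLL, ?_⟩
    rw [hLL] at h
    exact List.append_cancel_left h
  refine Summable.tsum_le_tsum_of_inj e hinj ?_ ?_ Summable.of_finite Summable.of_finite
  · intro c _
    refine List.prod_nonneg fun x hx => ?_
    simp only [List.mem_map] at hx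
    obtain ⟨w, _, rfl⟩ := hx
    exact ha w
  · rintro ⟨⟨L, hL⟩, ⟨M, hM⟩⟩
    simp only [he]
    rw [List.map_append, List.prod_append]

end NCDomain
end

section
/- With W_1,…,W_n the weighted left creation operators associated with f, one has Σ_{β∈F_n^+} b_β W_β (I − Σ_{|α|≥1} a_α W_α W_α*) W_β* = I, with convergence in the strong operator topology. -/
open Filter Topology
open scoped ComplexConjugate ENNReal

namespace NCDomain

/-- `f = Σ_{|α|≥1} a_α X_α` is a positive regular free holomorphic function:
`a_{g_0} = 0`, `a_α ≥ 0`, `a_{g_i} > 0`, and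
`limsup_{k→∞} (Σ_{|α|=k} |a_α|²)^{1/(2k)} < ∞`. -/
def PosRegular {n : ℕ} (a : Word n → ℝ) : Prop :=
  a 1 = 0 ∧ (∀ α, 0 ≤ a α) ∧ (∀ i : Fin n, 0 < a (FreeMonoid.of i)) ∧
    ∃ C : ℝ, ∀ᶠ k in atTop,
      (∑' α : {β : Word n // wordLen β = k}, (a α.1) ^ 2) ≤ C ^ (2 * k)

/-- For a tuple `T` of operators and a word `α = g_{i_1}⋯g_{i_k}`,
the product `T_α = T_{i_1}⋯T_{i_k}` (and `T_{g_0} = I`). -/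
noncomputable def opWord {n : ℕ} {H : Type*} [NormedAddCommGroup H] [NormedSpace ℂ H]
    (T : Fin n → H →L[ℂ] H) (α : Word n) : H →L[ℂ] H :=
  ((FreeMonoid.toList α).map T).prod

/-- The full Fock space `F²(H_n)`, realized as `ℓ²` over the free monoid. -/
abbrev Fock (n : ℕ) : Type := lp (fun _ : Word n => ℂ) 2

/-- The canonical orthonormal basis vector `e_α` of the Fock space. -/
noncomputable def fockBasis {n : ℕ} (α : Word n) : Fock n := lp.single 2 α (1 : ℂ)

/-- `W` is the tuple of weighted left creation operators associated with `f = Σ a_α X_α`: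
`W_i e_α = √(b_α / b_{g_i α}) e_{g_i α}`. -/
def IsWeightedShift {n : ℕ} (a : Word n → ℝ) (W : Fin n → Fock n →L[ℂ] Fock n) : Prop :=
  ∀ (i : Fin n) (α : Word n),
    W i (fockBasis α) =
      (Real.sqrt (bCoeff a α / bCoeff a (FreeMonoid.of i * α)) : ℂ) •
        fockBasis (FreeMonoid.of i * α)

/-! ### Auxiliary combinatorics: factorizations of a word -/

theorem eq_nil_of_prod_one {n : ℕ} {L : List (Word n)} (h1 : L.prod = 1)
    (h2 : ∀ w ∈ L, w ≠ 1) : L = [] := by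
  cases L with
  | nil => rfl
  | cons w L' =>
    exfalso
    have ht := congrArg FreeMonoid.toList h1
    rw [FreeMonoid.toList_prod] at ht
    simp only [List.map_cons, List.flatten_cons, FreeMonoid.toList_one] at ht
    have hw : FreeMonoid.toList w = [] := List.append_eq_nil_iff.mp ht |>.1
    exact h2 w (by simp) (FreeMonoid.toList.injective hw)

/-- Finset of all factorizations of a word (given as a list) into nonempty words. -/
noncomputable def allFacts {n : ℕ} : List (Fin n) → Finset (List (Word n))
  | [] => {[]}
  | (i :: t) => (Finset.range (t.length + 1)).biUnion
      (fun k => (allFacts (t.drop k)).image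
        (fun L => FreeMonoid.ofList (i :: t.take k) :: L))
  termination_by l => l.length
  decreasing_by simp

theorem allFacts_nil {n : ℕ} : (allFacts ([] : List (Fin n))) = {[]} := by rw [allFacts]

theorem allFacts_cons {n : ℕ} (i : Fin n) (t : List (Fin n)) : allFacts (i :: t) =
    (Finset.range (t.length + 1)).biUnion
      (fun k => (allFacts (t.drop k)).image
        (fun L => FreeMonoid.ofList (i :: t.take k) :: L)) := by rw [allFacts]

theorem mem_allFacts {n : ℕ} : ∀ (γ : List (Fin n)) (L : List (Word n)),
    L ∈ allFacts γ ↔ (L.prod = FreeMonoid.ofList γ ∧ ∀ w ∈ L, w ≠ 1) := by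
  have key : ∀ (N : ℕ) (γ : List (Fin n)), γ.length ≤ N → ∀ (L : List (Word n)),
      L ∈ allFacts γ ↔ (L.prod = FreeMonoid.ofList γ ∧ ∀ w ∈ L, w ≠ 1) := by
    intro N
    induction N with
    | zero =>
      intro γ hγ L
      have : γ = [] := List.eq_nil_of_length_eq_zero (Nat.le_zero.mp hγ)
      subst this
      rw [allFacts]
      simp only [Finset.mem_singleton, FreeMonoid.ofList_nil]
      constructor
      · rintro rfl; simp
      · rintro ⟨h1, h2⟩; exact eq_nil_of_prod_one h1 h2
    | succ N ih =>
      intro γ hγ L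
      cases γ with
      | nil => exact ih [] (by simp) L
      | cons i t =>
        rw [allFacts]
        simp only [Finset.mem_biUnion, Finset.mem_range, Finset.mem_image]
        have hlt : t.length ≤ N := by simpa using Nat.succ_le_succ_iff.mp hγ
        constructor
        · rintro ⟨k, hk, L', hL', rfl⟩
          rw [ih (t.drop k) (le_trans (by simp) hlt) L'] at hL'
          obtain ⟨hp, hne⟩ := hL'
          constructor
          · rw [List.prod_cons, hp, ← FreeMonoid.ofList_append]
            congr 1
            simp [List.take_append_drop]
          · intro w hw
            rcases List.mem_cons.mp hw with rfl | hw'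
            · intro hcon
              have := congrArg FreeMonoid.toList hcon
              simp at this
            · exact hne w hw'
        · rintro ⟨h1, h2⟩
          cases L with
          | nil =>
            exfalso
            have := congrArg FreeMonoid.toList h1
            simp at this
          | cons w L' =>
            have hw1 : w ≠ 1 := h2 w (by simp)
            have hwl : FreeMonoid.toList w ≠ [] := fun h =>
              hw1 (FreeMonoid.toList.injective (by simpa using h))
            -- from h1 : w * L'.prod = ofList (i :: t)
            have ht : FreeMonoid.toList w ++ FreeMonoid.toList L'.prod = i :: t := by
              have := congrArg FreeMonoid.toList h1
              rw [List.prod_cons, FreeMonoid.toList_mul] at this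
              simpa using this
            set m := (FreeMonoid.toList w).length with hm
            have hm1 : 1 ≤ m := by
              cases hwl' : FreeMonoid.toList w with
              | nil => exact absurd hwl' hwl
              | cons _ _ => simp [hm, hwl']
            have hmlen : m ≤ t.length + 1 := by
              have := congrArg List.length ht
              simp at this
              omega
            refine ⟨m - 1, by omega, L', ?_, ?_⟩
            · rw [ih (t.drop (m-1)) (le_trans (by simp) hlt) L']
              refine ⟨?_, fun w hw => h2 w (by simp [hw])⟩
              -- L'.prod = ofList (t.drop (m-1))
              have hdrop : FreeMonoid.toList L'.prod = (i :: t).drop m := by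
                rw [← ht]; simp [hm, List.drop_left']
              apply FreeMonoid.toList.injective
              rw [hdrop]
              have : (i :: t).drop m = t.drop (m - 1) := by
                rw [show m = (m-1)+1 by omega, List.drop_succ_cons]; simp
              simp [this]
            · -- ofList (i :: t.take (m-1)) :: L' = w :: L'
              congr 1
              have htake : FreeMonoid.toList w = (i :: t).take m := by
                rw [← ht]; simp [hm, List.take_left']
              apply FreeMonoid.toList.injective
              rw [htake]
              have : (i :: t).take m = i :: t.take (m - 1) := by
                rw [show m = (m-1)+1 by omega, List.take_succ_cons]; simp
              simp [this]
  intro γ L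
  exact key γ.length γ le_rfl L

/-! ### The coefficients `b_α` as finite sums, recursion, positivity -/

theorem bCoeff_hasSum {n : ℕ} (a : Word n → ℝ) (γ : Word n) :
    HasSum (fun L : {L : List (Word n) // L.prod = γ ∧ ∀ w ∈ L, w ≠ 1} => (L.1.map a).prod)
      (∑ L ∈ allFacts (FreeMonoid.toList γ), (L.map a).prod) := by
  have h := Finset.hasSum (allFacts (FreeMonoid.toList γ))
    (fun L : List (Word n) => (L.map a).prod)
  refine (Equiv.hasSum_iff (Equiv.subtypeEquivRight
    (p := fun L : List (Word n) => L ∈ allFacts (FreeMonoid.toList γ))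
    (q := fun L : List (Word n) => L.prod = γ ∧ ∀ w ∈ L, w ≠ 1)
    (fun L => by rw [mem_allFacts]; simp))).mp ?_
  have hfun : ((fun (L : { L // L.prod = γ ∧ ∀ w ∈ L, w ≠ 1 }) => (List.map a L.1).prod) ∘
      ⇑(Equiv.subtypeEquivRight
        (p := fun L : List (Word n) => L ∈ allFacts (FreeMonoid.toList γ))
        (q := fun L : List (Word n) => L.prod = γ ∧ ∀ w ∈ L, w ≠ 1)
        (fun L => by rw [mem_allFacts]; simp)))
      = (fun (L : { L // L ∈ allFacts (FreeMonoid.toList γ) }) => (List.map a L.1).prod) := by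
    funext x; rw [Function.comp_apply, Equiv.subtypeEquivRight_apply]
  rw [hfun]
  exact h

theorem bCoeff_eq_sum {n : ℕ} (a : Word n → ℝ) (γ : Word n) :
    bCoeff a γ = ∑ L ∈ allFacts (FreeMonoid.toList γ), (L.map a).prod := by
  by_cases h : γ = 1
  · subst h
    rw [bCoeff, if_pos rfl, FreeMonoid.toList_one, allFacts_nil]
    simp
  · rw [bCoeff, if_neg h]
    exact (bCoeff_hasSum a γ).tsum_eq

theorem bCoeff_one {n : ℕ} (a : Word n → ℝ) : bCoeff a 1 = 1 := by
  rw [bCoeff, if_pos rfl]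

theorem bCoeff_cons {n : ℕ} (a : Word n → ℝ) (i : Fin n) (t : List (Fin n)) :
    bCoeff a (FreeMonoid.ofList (i :: t)) =
      ∑ k ∈ Finset.range (t.length + 1),
        a (FreeMonoid.ofList (i :: t.take k)) * bCoeff a (FreeMonoid.ofList (t.drop k)) := by
  rw [bCoeff_eq_sum]
  simp only [FreeMonoid.toList_ofList]
  rw [allFacts_cons]
  rw [Finset.sum_biUnion]
  · refine Finset.sum_congr rfl (fun k hk => ?_)
    rw [Finset.sum_image (fun L1 _ L2 _ h => by simpa using h)]
    rw [bCoeff_eq_sum]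
    simp only [FreeMonoid.toList_ofList]
    rw [Finset.mul_sum]
    refine Finset.sum_congr rfl (fun L hL => ?_)
    simp [List.prod_cons]
  · -- pairwise disjointness
    intro k1 hk1 k2 hk2 hne
    simp only [Finset.mem_coe, Finset.mem_range] at hk1 hk2
    apply Finset.disjoint_left.mpr
    rintro L hL1 hL2
    simp only [Finset.mem_image] at hL1 hL2
    obtain ⟨L1, _, rfl⟩ := hL1
    obtain ⟨L2, _, hEq⟩ := hL2
    apply hne
    have hhead : FreeMonoid.ofList (i :: t.take k2) = FreeMonoid.ofList (i :: t.take k1) := by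
      exact (List.cons.injEq _ _ _ _).mp hEq |>.1
    have := congrArg (fun w => (FreeMonoid.toList w).length) hhead
    simp only [FreeMonoid.toList_ofList, List.length_cons, List.length_take] at this
    omega

theorem bCoeff_pos {n : ℕ} (a : Word n → ℝ) (ha : ∀ α, 0 ≤ a α)
    (hag : ∀ i : Fin n, 0 < a (FreeMonoid.of i)) (γ : Word n) : 0 < bCoeff a γ := by
  have key : ∀ (N : ℕ) (l : List (Fin n)), l.length ≤ N → 0 < bCoeff a (FreeMonoid.ofList l) := by
    intro N
    induction N with
    | zero =>
      intro l hl
      have : l = [] := List.eq_nil_of_length_eq_zero (Nat.le_zero.mp hl)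
      subst this
      rw [FreeMonoid.ofList_nil, bCoeff_one]; norm_num
    | succ N ih =>
      intro l hl
      cases l with
      | nil => rw [FreeMonoid.ofList_nil, bCoeff_one]; norm_num
      | cons i t =>
        have hlt : t.length ≤ N := by simpa using Nat.succ_le_succ_iff.mp hl
        rw [bCoeff_cons]
        have hterm : ∀ k ∈ Finset.range (t.length + 1),
            0 ≤ a (FreeMonoid.ofList (i :: t.take k)) * bCoeff a (FreeMonoid.ofList (t.drop k)) :=
          fun k _ => mul_nonneg (ha _)
            (le_of_lt (ih _ (le_trans (by simp) hlt)))
        have h0 : (0:ℕ) ∈ Finset.range (t.length + 1) := by simp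
        calc (0:ℝ) < a (FreeMonoid.ofList (i :: t.take 0)) * bCoeff a (FreeMonoid.ofList (t.drop 0)) := by
              simp only [List.take_zero, List.drop_zero]
              rw [FreeMonoid.ofList_singleton]; exact mul_pos (hag i) (ih t hlt)
          _ ≤ _ := Finset.single_le_sum hterm h0
  have := key (FreeMonoid.toList γ).length (FreeMonoid.toList γ) le_rfl
  simpa using this

/-! ### Operator lemmas -/

local notation "⟪" x ", " y "⟫" => @inner ℂ _ _ x y

section Ops
variable {n : ℕ} {a : Word n → ℝ} {W : Fin n → Fock n →L[ℂ] Fock n}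

theorem opWord_one : opWord W (1 : Word n) = 1 := rfl

theorem opWord_of (i : Fin n) : opWord W (FreeMonoid.of i) = W i := by
  simp [opWord]

theorem opWord_mul (α β : Word n) : opWord W (α * β) = opWord W α * opWord W β := by
  simp [opWord, FreeMonoid.toList_mul]

theorem opWord_apply_basis (hb : ∀ γ : Word n, 0 < bCoeff a γ) (hW : IsWeightedShift a W)
    (β α : Word n) :
    opWord W β (fockBasis α) =
      (Real.sqrt (bCoeff a α / bCoeff a (β * α)) : ℂ) • fockBasis (β * α) := by
  induction β using FreeMonoid.inductionOn' with
  | one =>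
    rw [opWord_one, one_mul]
    simp [div_self (hb α).ne']
  | of_mul i β ih =>
    rw [mul_assoc, opWord_mul, opWord_of]
    simp only [ContinuousLinearMap.mul_apply, ih, map_smul]
    rw [hW i (β * α), smul_smul]
    rw [← mul_assoc (FreeMonoid.of i) β α]
    norm_cast
    rw [← Real.sqrt_mul (div_nonneg (hb α).le (hb (β * α)).le)]
    congr 2
    rw [div_mul_div_comm, mul_comm (bCoeff a α), mul_div_mul_left _ _ (hb (β * α)).ne']

theorem fock_apply_eq_inner (x : Fock n) (γ : Word n) : x γ = ⟪fockBasis γ, x⟫ := by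
  rw [fockBasis, lp.inner_single_left]
  simp

theorem adjoint_opWord_apply (hb : ∀ γ : Word n, 0 < bCoeff a γ) (hW : IsWeightedShift a W)
    (β : Word n) (x : Fock n) (δ : Word n) :
    ((opWord W β).adjoint x) δ =
      (Real.sqrt (bCoeff a δ / bCoeff a (β * δ)) : ℂ) * x (β * δ) := by
  rw [fock_apply_eq_inner, ContinuousLinearMap.adjoint_inner_right,
    opWord_apply_basis hb hW, inner_smul_left]
  rw [fock_apply_eq_inner]
  simp [Complex.conj_ofReal]

theorem basis_apply (γ δ : Word n) :
    (fockBasis γ : Fock n) δ = if δ = γ then (1:ℂ) else 0 := by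
  rw [fockBasis, lp.single_apply]
  split_ifs with h
  · subst h; simp
  · simp [h]

theorem adjoint_opWord_basis_mul (hb : ∀ γ : Word n, 0 < bCoeff a γ) (hW : IsWeightedShift a W)
    (β δ : Word n) :
    (opWord W β).adjoint (fockBasis (β * δ)) =
      (Real.sqrt (bCoeff a δ / bCoeff a (β * δ)) : ℂ) • fockBasis δ := by
  apply lp.ext
  funext δ'
  rw [adjoint_opWord_apply hb hW, lp.coeFn_smul, Pi.smul_apply, basis_apply, basis_apply]
  by_cases h : δ' = δ
  · subst h; simp
  · have : β * δ' ≠ β * δ := fun hc => h (mul_left_cancel hc)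
    simp [h, this]

theorem adjoint_opWord_basis_zero (hb : ∀ γ : Word n, 0 < bCoeff a γ) (hW : IsWeightedShift a W)
    (β γ : Word n) (h : ∀ δ, γ ≠ β * δ) :
    (opWord W β).adjoint (fockBasis γ) = 0 := by
  apply lp.ext
  funext δ'
  rw [adjoint_opWord_apply hb hW, basis_apply]
  simp [(h δ').symm, Ne.symm (h δ')]

theorem single_eq_smul_basis (γ : Word n) (c : ℂ) :
    lp.single 2 γ c = c • (fockBasis γ : Fock n) := by
  apply lp.ext
  funext δ
  rw [lp.coeFn_smul, Pi.smul_apply, basis_apply, lp.single_apply]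
  split_ifs with h
  · subst h; simp
  · simp [h]


/-! ### The defect operator is the vacuum projection -/

theorem ofList_cons_ne_one {n : ℕ} (i : Fin n) (t : List (Fin n)) :
    FreeMonoid.ofList (i :: t) ≠ 1 := by
  intro h
  have := congrArg FreeMonoid.toList h
  simp at this

theorem E_basis (hb : ∀ γ : Word n, 0 < bCoeff a γ) (hW : IsWeightedShift a W)
    (E : Fock n →L[ℂ] Fock n)
    (hE : ∀ x : Fock n, HasSum (fun α : {γ : Word n // γ ≠ 1} =>
        (a α.1 : ℂ) • opWord W α.1 ((opWord W α.1).adjoint x)) (x - E x))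
    (γ : Word n) : E (fockBasis γ) = if γ = 1 then fockBasis 1 else 0 := by
  suffices h : ∀ l : List (Fin n), E (fockBasis (FreeMonoid.ofList l)) =
      if FreeMonoid.ofList l = 1 then fockBasis 1 else 0 by
    convert h (FreeMonoid.toList γ) <;> simp
  intro l
  cases l with
  | nil =>
    rw [FreeMonoid.ofList_nil, if_pos rfl]
    have hzero : ∀ α : {γ' : Word n // γ' ≠ 1},
        (a α.1 : ℂ) • opWord W α.1 ((opWord W α.1).adjoint (fockBasis (1 : Word n))) = 0 := by
      intro α
      rw [adjoint_opWord_basis_zero hb hW α.1 1 ?_]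
      · simp
      · intro δ hδ
        have hl := congrArg FreeMonoid.length hδ
        rw [FreeMonoid.length_mul, FreeMonoid.length_one] at hl
        exact α.2 (FreeMonoid.length_eq_zero.mp (by omega))
    have h0 : HasSum (fun α : {γ' : Word n // γ' ≠ 1} =>
        (a α.1 : ℂ) • opWord W α.1 ((opWord W α.1).adjoint (fockBasis (1 : Word n)))) 0 := by
      rw [funext hzero]; exact hasSum_zero
    have := (hE (fockBasis 1)).unique h0
    have h1 : E (fockBasis (1 : Word n)) = fockBasis 1 := by
      have := sub_eq_zero.mp this
      exact this.symm
    exact h1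
  | cons i t =>
    rw [if_neg (ofList_cons_ne_one i t)]
    set γ := FreeMonoid.ofList (i :: t) with hγdef
    set F : {γ' : Word n // γ' ≠ 1} → Fock n := fun α =>
      (a α.1 : ℂ) • opWord W α.1 ((opWord W α.1).adjoint (fockBasis γ)) with hF
    set S : Finset {γ' : Word n // γ' ≠ 1} :=
      (Finset.range (t.length + 1)).image
        (fun k => ⟨FreeMonoid.ofList (i :: t.take k), ofList_cons_ne_one i _⟩) with hS
    have hvanish : ∀ α ∉ S, F α = 0 := by
      intro α hα
      by_cases hp : ∃ δ, γ = α.1 * δ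
      · exfalso
        apply hα
        obtain ⟨δ, hδ⟩ := hp
        have hts : FreeMonoid.toList α.1 ++ FreeMonoid.toList δ = i :: t := by
          simpa [hγdef] using (congrArg FreeMonoid.toList hδ).symm
        have hm1 : 1 ≤ (FreeMonoid.toList α.1).length := by
          rcases Nat.eq_zero_or_pos (FreeMonoid.toList α.1).length with h | h
          · exact absurd (FreeMonoid.toList.injective
              (by simpa using List.eq_nil_of_length_eq_zero h)) α.2
          · exact h
        have hmlen : (FreeMonoid.toList α.1).length ≤ t.length + 1 := by
          have := congrArg List.length hts
          simp at this
          omega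
        refine Finset.mem_image.mpr ⟨(FreeMonoid.toList α.1).length - 1, by simp; omega, ?_⟩
        apply Subtype.ext
        simp only
        apply FreeMonoid.toList.injective
        rw [FreeMonoid.toList_ofList]
        have htake : FreeMonoid.toList α.1 = (i :: t).take (FreeMonoid.toList α.1).length := by
          rw [← hts]; simp [List.take_left']
        rw [show (i :: t.take ((FreeMonoid.toList α.1).length - 1))
            = (i :: t).take (((FreeMonoid.toList α.1).length - 1) + 1) from
            List.take_succ_cons.symm, show (FreeMonoid.toList α.1).length - 1 + 1
            = (FreeMonoid.toList α.1).length by omega]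
        exact htake.symm
      · push_neg at hp
        rw [hF]
        simp only
        rw [adjoint_opWord_basis_zero hb hW _ _ hp]
        simp
    have hsum : HasSum F (∑ α ∈ S, F α) := hasSum_sum_of_ne_finset_zero hvanish
    have hinj : ∀ k1 ∈ Finset.range (t.length + 1), ∀ k2 ∈ Finset.range (t.length + 1),
        (⟨FreeMonoid.ofList (i :: t.take k1), ofList_cons_ne_one i _⟩ : {γ' : Word n // γ' ≠ 1})
          = ⟨FreeMonoid.ofList (i :: t.take k2), ofList_cons_ne_one i _⟩ → k1 = k2 := by
      intro k1 hk1 k2 hk2 h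
      have := congrArg (fun w => (FreeMonoid.toList w.1).length) h
      simp only [FreeMonoid.toList_ofList, List.length_cons, List.length_take] at this
      simp only [Finset.mem_range] at hk1 hk2
      omega
    have hval : (∑ α ∈ S, F α) = fockBasis γ := by
      rw [hS, Finset.sum_image hinj]
      have hterm : ∀ k ∈ Finset.range (t.length + 1),
          F ⟨FreeMonoid.ofList (i :: t.take k), ofList_cons_ne_one i _⟩ =
            ((a (FreeMonoid.ofList (i :: t.take k)) *
              (bCoeff a (FreeMonoid.ofList (t.drop k)) / bCoeff a γ) : ℝ) : ℂ) • fockBasis γ := by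
        intro k hk
        have hfac : γ = FreeMonoid.ofList (i :: t.take k) * FreeMonoid.ofList (t.drop k) := by
          rw [← FreeMonoid.ofList_append, hγdef]
          congr 1
          simp [List.take_append_drop]
        rw [hF]
        simp only
        conv_lhs => rw [hfac]
        rw [adjoint_opWord_basis_mul hb hW, map_smul,
          opWord_apply_basis hb hW, smul_smul, smul_smul]
        rw [← hfac]
        congr 1
        push_cast
        rw [← Complex.ofReal_mul]
        norm_cast
        rw [mul_assoc, Real.mul_self_sqrt (div_nonneg (hb _).le (hb _).le)]
      rw [Finset.sum_congr rfl hterm, ← Finset.sum_smul, ← Complex.ofReal_sum]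
      have : (∑ k ∈ Finset.range (t.length + 1),
          a (FreeMonoid.ofList (i :: t.take k)) *
            (bCoeff a (FreeMonoid.ofList (t.drop k)) / bCoeff a γ)) = 1 := by
        simp only [mul_div_assoc']
        rw [← Finset.sum_div]
        rw [hγdef, ← bCoeff_cons]
        exact div_self (hb _).ne'
      rw [this]
      simp
    have := (hE (fockBasis γ)).unique (hval ▸ hsum)
    exact sub_eq_self.mp this

theorem E_apply (hb : ∀ γ : Word n, 0 < bCoeff a γ) (hW : IsWeightedShift a W)
    (E : Fock n →L[ℂ] Fock n)
    (hE : ∀ x : Fock n, HasSum (fun α : {γ : Word n // γ ≠ 1} =>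
        (a α.1 : ℂ) • opWord W α.1 ((opWord W α.1).adjoint x)) (x - E x))
    (y : Fock n) : E y = (y 1) • fockBasis 1 := by
  have h1 : HasSum (fun γ : Word n => lp.single 2 γ (y γ)) y :=
    lp.hasSum_single ENNReal.ofNat_ne_top y
  have h2 : HasSum (fun γ : Word n => E (lp.single 2 γ (y γ))) (E y) := h1.mapL E
  have hfun : (fun γ : Word n => E (lp.single 2 γ (y γ)))
      = fun γ : Word n => if γ = 1 then (y 1) • (fockBasis 1 : Fock n) else 0 := by
    funext γ
    rw [single_eq_smul_basis, map_smul, E_basis hb hW E hE]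
    by_cases h : γ = 1
    · subst h; simp
    · simp [h]
  rw [hfun] at h2
  have h4 : HasSum (fun γ : Word n => if γ = 1 then (y 1) • (fockBasis 1 : Fock n) else 0)
      ((y 1) • fockBasis 1) := by
    have := hasSum_ite_eq (1 : Word n) ((y 1) • (fockBasis 1 : Fock n))
    exact this
  exact h2.unique h4

end Ops

/-- `Σ_{β} b_β W_β (I − Σ_{|α|≥1} a_α W_α W_α*) W_β* = I`, with convergence
in the strong operator topology. Here `E` is the operator `I − Σ_{|α|≥1} a_α W_α W_α*`
(the inner series converging in the strong operator topology). -/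
theorem sum_bW_defect_eq_id {n : ℕ} (a : Word n → ℝ) (hreg : PosRegular a)
    (W : Fin n → Fock n →L[ℂ] Fock n) (hW : IsWeightedShift a W)
    (E : Fock n →L[ℂ] Fock n)
    (hE : ∀ x : Fock n,
      HasSum (fun α : {γ : Word n // γ ≠ 1} =>
          (a α.1 : ℂ) • opWord W α.1 ((opWord W α.1).adjoint x)) (x - E x)) :
    ∀ x : Fock n,
      HasSum (fun β : Word n =>
        (bCoeff a β : ℂ) • opWord W β (E ((opWord W β).adjoint x))) x := by
  intro x
  obtain ⟨ha0, ha, hag, -⟩ := hreg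
  have hb : ∀ γ : Word n, 0 < bCoeff a γ := bCoeff_pos a ha hag
  have key : ∀ β : Word n,
      (bCoeff a β : ℂ) • opWord W β (E ((opWord W β).adjoint x)) = lp.single 2 β (x β) := by
    intro β
    rw [E_apply hb hW E hE]
    have hA1 : ((opWord W β).adjoint x) 1 = (Real.sqrt (1 / bCoeff a β) : ℂ) * x β := by
      have h := adjoint_opWord_apply hb hW β x 1
      rwa [mul_one, bCoeff_one] at h
    rw [hA1, map_smul, opWord_apply_basis hb hW β 1, bCoeff_one, mul_one]
    rw [smul_smul, smul_smul]
    rw [single_eq_smul_basis]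
    congr 1
    have hs : (Real.sqrt (1 / bCoeff a β) : ℂ) * (Real.sqrt (1 / bCoeff a β) : ℂ)
        = ((1 / bCoeff a β : ℝ) : ℂ) := by
      norm_cast
      exact Real.mul_self_sqrt (div_nonneg zero_le_one (hb β).le)
    rw [show (bCoeff a β : ℂ) * ((Real.sqrt (1 / bCoeff a β) : ℂ) * x β) *
          (Real.sqrt (1 / bCoeff a β) : ℂ)
        = (bCoeff a β : ℂ) * ((Real.sqrt (1 / bCoeff a β) : ℂ) *
          (Real.sqrt (1 / bCoeff a β) : ℂ)) * x β by ring, hs]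
    push_cast
    rw [mul_one_div, div_self (by exact_mod_cast (hb β).ne')]
    ring
  simp only [key]
  exact lp.hasSum_single ENNReal.ofNat_ne_top x

end NCDomain
end
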